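/- Let p(z₁,z₂) = 2 − z₁ − z₂. Then the function 1/p is not square-integrable on the two-torus 𝕋²: ∫_{𝕋²} |2 − z₁ − z₂|^{−2} dσ = ∞, where dσ is normalized Lebesgue measure on 𝕋². -/

import Mathlib

/-! Near `(0, 0)` we have `‖2 - e^{ix} - e^{iy}‖ ≤ ‖1 - e^{ix}‖ + ‖1 - e^{iy}‖ ≤ x + y`, so on
`(0, 1)²` the integrand dominates `(x + y)⁻²`. Integrating in `y` over `(0, x)` alone already
gives at least `(4x)⁻¹`, and `x⁻¹` is not integrable at `0`. -/

open MeasureTheory Real Set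

lemma norm_two_sub_exp_sub_exp_le (x y : ℝ) :
    ‖(2 : ℂ) - Complex.exp (Complex.I * x) - Complex.exp (Complex.I * y)‖ ≤ |x| + |y| :=
  calc ‖(2 : ℂ) - Complex.exp (Complex.I * x) - Complex.exp (Complex.I * y)‖
      = ‖(Complex.exp (Complex.I * x) - 1) + (Complex.exp (Complex.I * y) - 1)‖ := by
        rw [← norm_neg]; ring_nf
    _ ≤ ‖x‖ + ‖y‖ := (norm_add_le _ _).trans
        (add_le_add norm_exp_I_mul_ofReal_sub_one_le
          norm_exp_I_mul_ofReal_sub_one_le)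

lemma two_sub_exp_sub_exp_ne_zero {x : ℝ} (hx₀ : 0 < x) (hx : x < 2 * π) (y : ℝ) :
    (2 : ℂ) - Complex.exp (Complex.I * x) - Complex.exp (Complex.I * y) ≠ 0 := by
  have hcos : cos x ≠ 1 := by
    rw [Ne, cos_eq_one_iff_of_lt_of_lt (by linarith) hx]
    exact hx₀.ne'
  have hre : ((2 : ℂ) - Complex.exp (Complex.I * x) - Complex.exp (Complex.I * y)).re
      = (1 - cos x) + (1 - cos y) := by
    simp only [mul_comm Complex.I, Complex.sub_re, Complex.exp_ofReal_mul_I_re, Complex.re_ofNat]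
    ring
  intro h
  have := congrArg Complex.re h
  rw [hre, Complex.zero_re] at this
  linarith [(cos_le_one x).lt_of_ne hcos, cos_le_one y]

lemma inv_add_sq_le_one_div_norm_sq {x y : ℝ} (hx₀ : 0 < x) (hx : x < 2 * π) (hy : 0 ≤ y) :
    ((x + y) ^ 2)⁻¹ ≤
      1 / ‖(2 : ℂ) - Complex.exp (Complex.I * x) - Complex.exp (Complex.I * y)‖ ^ 2 := by
  rw [one_div]
  gcongr
  · exact pow_pos (norm_pos_iff.2 (two_sub_exp_sub_exp_ne_zero hx₀ hx y)) 2
  · simpa [abs_of_pos hx₀, abs_of_nonneg hy] using norm_two_sub_exp_sub_exp_le x y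

lemma lintegral_Ioo_inv_eq_top {t : ℝ} (ht : 0 < t) :
    ∫⁻ x in Ioo 0 t, ENNReal.ofReal x⁻¹ = ⊤ := by
  by_contra h
  have hint : IntegrableOn (fun x : ℝ => x⁻¹) (Ioo 0 t) :=
    (lintegral_ofReal_ne_top_iff_integrable measurable_inv.aestronglyMeasurable
      ((ae_restrict_mem measurableSet_Ioo).mono fun x hx => inv_nonneg.2 hx.1.le)).1 h
  rw [← intervalIntegrable_iff_integrableOn_Ioo_of_le ht.le, intervalIntegrable_inv_iff] at hint
  simp [ht.ne] at hint

lemma ofReal_inv_four_mul_le_lintegral_Ioo_inv_add_sq {x : ℝ} (hx : 0 < x) :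
    ENNReal.ofReal (4 * x)⁻¹ ≤ ∫⁻ y in Ioo 0 x, ENNReal.ofReal ((x + y) ^ 2)⁻¹ :=
  calc ENNReal.ofReal (4 * x)⁻¹
      = ∫⁻ _ in Ioo 0 x, ENNReal.ofReal ((x + x) ^ 2)⁻¹ := by
        rw [setLIntegral_const, Real.volume_Ioo, sub_zero, ← ENNReal.ofReal_mul (by positivity)]
        congr 1
        field_simp
        ring
    _ ≤ ∫⁻ y in Ioo 0 x, ENNReal.ofReal ((x + y) ^ 2)⁻¹ := by
        refine setLIntegral_mono' measurableSet_Ioo fun y hy => ENNReal.ofReal_le_ofReal ?_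
        have hy₀ : 0 < x + y := by linarith [hy.1]
        gcongr
        exact hy.2.le

lemma lintegral_Ioo_prod_Ioo_inv_add_sq_eq_top {t : ℝ} (ht : 0 < t) :
    ∫⁻ θ : ℝ × ℝ in Ioo 0 t ×ˢ Ioo 0 t, ENNReal.ofReal ((θ.1 + θ.2) ^ 2)⁻¹ = ⊤ := by
  rw [Measure.volume_eq_prod, setLIntegral_prod _ (by fun_prop), eq_top_iff]
  calc ⊤ = ENNReal.ofReal 4⁻¹ * ∫⁻ x in Ioo 0 t, ENNReal.ofReal x⁻¹ := by
        rw [lintegral_Ioo_inv_eq_top ht, ENNReal.mul_top (by norm_num)]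
    _ = ∫⁻ x in Ioo 0 t, ENNReal.ofReal (4 * x)⁻¹ := by
        rw [← lintegral_const_mul _ (by fun_prop)]
        refine setLIntegral_congr_fun measurableSet_Ioo fun x _ => ?_
        rw [← ENNReal.ofReal_mul (by norm_num), mul_inv]
    _ ≤ ∫⁻ x in Ioo 0 t, ∫⁻ y in Ioo 0 t, ENNReal.ofReal ((x + y) ^ 2)⁻¹ :=
        setLIntegral_mono' measurableSet_Ioo fun x hx =>
          (ofReal_inv_four_mul_le_lintegral_Ioo_inv_add_sq hx.1).trans
            (lintegral_mono_set (Ioo_subset_Ioo_right hx.2.le))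

theorem stmt9 :
    ∫⁻ θ : ℝ × ℝ in Set.Icc (0 : ℝ) (2 * π) ×ˢ Set.Icc (0 : ℝ) (2 * π),
      ENNReal.ofReal
        (1 / ‖(2 : ℂ) - Complex.exp (Complex.I * (θ.1 : ℂ)) -
            Complex.exp (Complex.I * (θ.2 : ℂ))‖ ^ 2) = ⊤ := by
  have h2π : (1 : ℝ) < 2 * π := by linarith [pi_gt_three]
  have hIoo : Ioo (0 : ℝ) 1 ⊆ Icc 0 (2 * π) :=
    Ioo_subset_Icc_self.trans (Icc_subset_Icc_right h2π.le)
  rw [eq_top_iff]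
  calc ⊤ = ∫⁻ θ : ℝ × ℝ in Ioo 0 1 ×ˢ Ioo 0 1, ENNReal.ofReal ((θ.1 + θ.2) ^ 2)⁻¹ :=
        (lintegral_Ioo_prod_Ioo_inv_add_sq_eq_top one_pos).symm
    _ ≤ ∫⁻ θ : ℝ × ℝ in Ioo 0 1 ×ˢ Ioo 0 1, ENNReal.ofReal
          (1 / ‖(2 : ℂ) - Complex.exp (Complex.I * θ.1) - Complex.exp (Complex.I * θ.2)‖ ^ 2) :=
        setLIntegral_mono' (measurableSet_Ioo.prod measurableSet_Ioo) fun θ ⟨hx, hy⟩ =>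
          ENNReal.ofReal_le_ofReal
            (inv_add_sq_le_one_div_norm_sq hx.1 (hx.2.trans h2π) hy.1.le)
    _ ≤ _ := lintegral_mono_set (prod_mono hIoo hIoo)
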